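/- arXiv:0806.0787 — 2 statements merged into one kernel-verified Lean document; each statement's English description precedes it below -/
import Mathlib

section
/- Let k be an algebraically closed field of characteristic p > 0. Let A ⊆ B be commutative k-algebras, both finitely generated as k-algebras, with B finite as an A-module (i.e. B is a finitely generated A-module). Assume the inclusion A ⊆ B induces a bijection on k-valued points, i.e. the map sending a k-algebra homomorphism B → k to its restriction A → k is a bijection from the set of k-algebra homomorphisms B → k onto the set of k-algebra homomorphisms A → k. Then for every b ∈ B there exists a natural number m such that b^(p^m) ∈ A. -/
/-!
Over a maximal ideal `m` of `A`, the fibre `D ⧸ m D` of an intermediate algebra `A ⊆ D ⊆ B` has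
at most one `k`-point (points of `D` extend to `B` by lying-over, and points of `B` are determined
by their restriction to `A`), so by the Nullstellensatz every element of `D` is a scalar plus a
nilpotent there. The fibre has dimension at most the number `n` of `A`-module generators of `D`,
so `x ^ p ^ n` is a scalar in all fibres at once: it lies in the subalgebra `fiberScalars A D`.

Take a filtration `0 = F₀ ⊆ ⋯ ⊆ Fₗ = B ⧸ A` with `Fᵢ₊₁ / Fᵢ ≅ A ⧸ P`, `P` prime. An element of
`Fᵢ₊₁` lying in `m Fᵢ₊₁ + Fᵢ` for every maximal `m` lies in `Fᵢ`, because `P` is an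
intersection of maximal ideals (`A` is a Jacobson ring). Hence if `D` maps into `Fᵢ₊₁`, its
fibrewise scalars map into `Fᵢ`; descending from `D = B` to `F₀ = 0` takes `b` into `A` after
finitely many `p`-power steps.
-/

open Module Submodule

section Points

variable {k : Type*} [Field k]

theorem AlgHom.eq_of_le_ker {R : Type*} [CommRing R] [Algebra k R] {m : Ideal R}
    [hm : m.IsMaximal] {φ ψ : R →ₐ[k] k} (hφ : m ≤ RingHom.ker φ) (hψ : m ≤ RingHom.ker ψ) :
    φ = ψ := by
  have hker : RingHom.ker φ = m := (hm.eq_of_le (RingHom.ker_ne_top φ) hφ).symm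
  ext r
  have hr : r - algebraMap k R (φ r) ∈ RingHom.ker ψ :=
    hψ (hker ▸ by simp [RingHom.mem_ker])
  rw [RingHom.mem_ker, map_sub, AlgHom.commutes, Algebra.algebraMap_self_apply, sub_eq_zero] at hr
  exact hr.symm

variable [IsAlgClosed k] {T : Type*} [CommRing T] [Algebra k T] [Algebra.FiniteType k T]

theorem exists_algHom_ker_eq_of_isMaximal (M : Ideal T) [M.IsMaximal] :
    ∃ χ : T →ₐ[k] k, RingHom.ker χ = M := by
  let := Ideal.Quotient.field M
  have : Module.Finite k (T ⧸ M) := finite_of_finite_type_of_isJacobsonRing k (T ⧸ M)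
  refine ⟨(IsAlgClosed.lift : (T ⧸ M) →ₐ[k] k).comp (Ideal.Quotient.mkₐ k M), ?_⟩
  ext t
  simp [RingHom.mem_ker, Ideal.Quotient.eq_zero_iff_mem]

theorem isNilpotent_of_forall_algHom_apply_eq_zero {t : T} (h : ∀ χ : T →ₐ[k] k, χ t = 0) :
    IsNilpotent t := by
  have : IsJacobsonRing T := isJacobsonRing_of_finiteType (A := k)
  rw [← mem_nilradical, nilradical, Ideal.radical_eq_jacobson, Ideal.jacobson, Ideal.mem_sInf]
  rintro M ⟨-, hM⟩
  obtain ⟨χ, rfl⟩ := exists_algHom_ker_eq_of_isMaximal (k := k) M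
  exact h χ

theorem exists_isNilpotent_sub_algebraMap [Subsingleton (T →ₐ[k] k)] (t : T) :
    ∃ c : k, IsNilpotent (t - algebraMap k T c) := by
  rcases isEmpty_or_nonempty (T →ₐ[k] k) with _ | ⟨⟨χ₀⟩⟩
  · exact ⟨0, isNilpotent_of_forall_algHom_apply_eq_zero fun χ : T →ₐ[k] k => isEmptyElim χ⟩
  · refine ⟨χ₀ t, isNilpotent_of_forall_algHom_apply_eq_zero fun χ : T →ₐ[k] k => ?_⟩
    rw [Subsingleton.elim χ χ₀, map_sub, AlgHom.commutes, Algebra.algebraMap_self_apply, sub_self]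

theorem AlgHom.exists_comp_toAlgHom_eq {R S : Type*} [CommRing R] [CommRing S] [Algebra k R]
    [Algebra k S] [Algebra R S] [IsScalarTower k R S] [Algebra.IsIntegral R S]
    [Algebra.FiniteType k S] (hRS : Function.Injective (algebraMap R S)) (φ : R →ₐ[k] k) :
    ∃ Φ : S →ₐ[k] k, Φ.comp (IsScalarTower.toAlgHom k R S) = φ := by
  have : (RingHom.ker φ).IsMaximal :=
    RingHom.ker_isMaximal_of_surjective φ fun c => ⟨algebraMap k R c, φ.commutes c⟩
  obtain ⟨Q, hQ, hQφ⟩ := Ideal.exists_ideal_over_maximal_of_isIntegral (RingHom.ker φ)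
    (by rw [(RingHom.injective_iff_ker_eq_bot _).mp hRS]; exact bot_le)
  obtain ⟨Φ, hΦ⟩ := exists_algHom_ker_eq_of_isMaximal (k := k) Q
  refine ⟨Φ, AlgHom.eq_of_le_ker (m := RingHom.ker φ) (fun r hr => ?_) le_rfl⟩
  rw [← hQφ, Ideal.mem_comap, ← hΦ] at hr
  exact hr

theorem injective_comp_of_injective_comp_toAlgHom {R S T : Type*} [CommRing R] [CommRing S]
    [CommRing T] [Algebra k R] [Algebra k S] [Algebra k T] [Algebra R S] [IsScalarTower k R S]
    [Algebra.IsIntegral R S] [Algebra.FiniteType k S] (hRS : Function.Injective (algebraMap R S))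
    (f : T →ₐ[k] R)
    (h : Function.Injective fun Φ : S →ₐ[k] k => Φ.comp ((IsScalarTower.toAlgHom k R S).comp f)) :
    Function.Injective fun χ : R →ₐ[k] k => χ.comp f := by
  intro χ₁ χ₂ hχ
  obtain ⟨Φ₁, rfl⟩ := AlgHom.exists_comp_toAlgHom_eq hRS χ₁
  obtain ⟨Φ₂, rfl⟩ := AlgHom.exists_comp_toAlgHom_eq hRS χ₂
  exact congrArg (fun Φ : S →ₐ[k] k => Φ.comp (IsScalarTower.toAlgHom k R S)) (h hχ)

end Points

theorem IsNilpotent.pow_finrank_eq_zero {K Q : Type*} [Field K] [Ring Q] [Algebra K Q]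
    [Module.Finite K Q] {z : Q} (hz : IsNilpotent z) : z ^ finrank K Q = 0 := by
  have hmul : IsNilpotent (LinearMap.mulLeft K z) := (LinearMap.isNilpotent_mulLeft_iff K z).mpr hz
  have := LinearMap.aeval_self_charpoly (LinearMap.mulLeft K z)
  rw [hmul.charpoly_eq_X_pow_finrank, map_pow, Polynomial.aeval_X, LinearMap.pow_mulLeft] at this
  simpa using LinearMap.congr_fun this 1

theorem sub_algebraMap_pow_char_pow {k R : Type*} [Field k] [CommRing R] [Algebra k R] (p : ℕ)
    [Fact p.Prime] [CharP k p] (x : R) (c : k) (n : ℕ) :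
    (x - algebraMap k R c) ^ p ^ n = x ^ p ^ n - algebraMap k R (c ^ p ^ n) := by
  rcases subsingleton_or_nontrivial R with _ | _
  · exact Subsingleton.elim _ _
  · have := charP_of_injective_algebraMap' k (A := R) p
    rw [sub_pow_char_pow, map_pow]

theorem span_range_quotient_mk_eq_top {A D : Type*} [CommRing A] [CommRing D] [Algebra A D]
    (m : Ideal A) {ι : Type*} {v : ι → D} (hv : span A (Set.range v) = ⊤) :
    span (A ⧸ m) (Set.range (Ideal.Quotient.mk (m.map (algebraMap A D)) ∘ v)) = ⊤ := by
  rw [← restrictScalars_eq_top_iff A, restrictScalars_span A (A ⧸ m) Ideal.Quotient.mk_surjective,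
    Set.range_comp]
  have := map_span (Ideal.Quotient.mkₐ A (m.map (algebraMap A D))).toLinearMap (Set.range v)
  rw [hv, Submodule.map_top, LinearMap.range_eq_top.mpr (Ideal.Quotient.mkₐ_surjective A _)] at this
  exact this.symm

theorem Submodule.IsQuotientEquivQuotientPrime.mem_of_forall_mem_smul_sup {A M : Type*}
    [CommRing A] [IsJacobsonRing A] [AddCommGroup M] [Module A M] {N₁ N₂ : Submodule A M}
    (h : N₁.IsQuotientEquivQuotientPrime N₂) {y : M} (hy : y ∈ N₂)
    (hmax : ∀ m : Ideal A, m.IsMaximal → y ∈ m • N₂ ⊔ N₁) : y ∈ N₁ := by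
  obtain ⟨x, hP, rfl⟩ := isQuotientEquivQuotientPrime_iff.mp h
  set P : Ideal A := (⊥ : Submodule A (M ⧸ N₁)).colon {N₁.mkQ x}
  have hmemP : ∀ r : A, r ∈ P ↔ r • x ∈ N₁ := fun r => by
    rw [mem_colon_singleton, mem_bot, mkQ_apply, ← Quotient.mk_smul, Quotient.mk_eq_zero]
  obtain ⟨n, hn, _, hr, rfl⟩ := mem_sup.mp hy
  obtain ⟨r, rfl⟩ := mem_span_singleton.mp hr
  suffices r ∈ P from N₁.add_mem hn ((hmemP r).mp this)
  rw [← IsJacobsonRing.out' P hP.isRadical, Ideal.jacobson, Ideal.mem_sInf]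
  rintro m ⟨hPm, hm⟩
  have hle : m • (N₁ ⊔ span A {x}) ⊔ N₁ ≤ m • span A {x} ⊔ N₁ := by
    rw [smul_sup]
    exact sup_le (sup_le (smul_le_right.trans le_sup_right) le_sup_left) le_sup_right
  obtain ⟨_, hc, n', hn', hsum⟩ := mem_sup.mp (hle (hmax m hm))
  obtain ⟨c, hcm, rfl⟩ := mem_smul_span_singleton.mp hc
  have : (r - c) • x ∈ N₁ := by
    rw [show (r - c) • x = n' - n by
      rw [sub_smul, sub_eq_sub_iff_add_eq_add, add_comm (r • x), ← hsum, add_comm]]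
    exact N₁.sub_mem hn' hn
  simpa using m.add_mem (hPm ((hmemP _).mpr this)) hcm

section FiberScalars

variable (A D : Type*) [CommRing A] [CommRing D] [Algebra A D]

def fiberScalars : Subalgebra A D :=
  ⨅ m : {m : Ideal A // m.IsMaximal},
    (⊥ : Subalgebra A (D ⧸ m.1.map (algebraMap A D))).comap (Ideal.Quotient.mkₐ A _)

variable {A D}

theorem mem_fiberScalars {x : D} :
    x ∈ fiberScalars A D ↔ ∀ m : Ideal A, m.IsMaximal →
      ∃ a : A, algebraMap A (D ⧸ m.map (algebraMap A D)) a = Ideal.Quotient.mk _ x := by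
  simp [fiberScalars, Algebra.mem_iInf, Algebra.mem_bot]

end FiberScalars

section Fibres

variable {k A D : Type*} [Field k] [CommRing A] [CommRing D] [Algebra k A] [Algebra k D]
  [Algebra A D] [IsScalarTower k A D]

theorem subsingleton_algHom_quotient_map
    (hinj : Function.Injective fun χ : D →ₐ[k] k => χ.comp (IsScalarTower.toAlgHom k A D))
    (m : Ideal A) [m.IsMaximal] : Subsingleton (D ⧸ m.map (algebraMap A D) →ₐ[k] k) := by
  refine ⟨fun ξ₁ ξ₂ => Ideal.Quotient.algHom_ext k (hinj (AlgHom.eq_of_le_ker (m := m) ?_ ?_))⟩ <;>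
  · intro a ha
    simp [RingHom.mem_ker, Ideal.Quotient.eq_zero_iff_mem.mpr (Ideal.mem_map_of_mem _ ha)]

theorem exists_pow_char_pow_mem_fiberScalars [IsAlgClosed k] (p : ℕ) [Fact p.Prime] [CharP k p]
    [Algebra.FiniteType k D] [Module.Finite A D]
    (hinj : Function.Injective fun χ : D →ₐ[k] k => χ.comp (IsScalarTower.toAlgHom k A D)) :
    ∃ s : ℕ, ∀ x : D, x ^ p ^ s ∈ fiberScalars A D := by
  obtain ⟨n, v, hv⟩ := Module.Finite.exists_fin (R := A) (M := D)
  refine ⟨n, fun x => mem_fiberScalars.mpr fun m hm => ?_⟩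
  let := Ideal.Quotient.field m
  have := subsingleton_algHom_quotient_map hinj m
  have hspan := span_range_quotient_mk_eq_top m hv
  have : Module.Finite (A ⧸ m) (D ⧸ m.map (algebraMap A D)) :=
    Module.Finite.of_restrictScalars_finite A _ _
  obtain ⟨c, hc⟩ :=
    exists_isNilpotent_sub_algebraMap (k := k) (Ideal.Quotient.mk (m.map (algebraMap A D)) x)
  have hdim : finrank (A ⧸ m) (D ⧸ m.map (algebraMap A D)) ≤ p ^ n :=
    (finrank_le_of_span_eq_top hspan).trans ((Fintype.card_fin n).trans_le
      (Nat.lt_pow_self (Fact.out : p.Prime).one_lt).le)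
  have hzero := pow_eq_zero_of_le hdim hc.pow_finrank_eq_zero
  rw [sub_algebraMap_pow_char_pow, sub_eq_zero, ← map_pow] at hzero
  exact ⟨algebraMap k A (c ^ p ^ n), by rw [hzero, ← IsScalarTower.algebraMap_apply]⟩

end Fibres

section Filtration

variable {A B : Type*} [CommRing A] [CommRing B] [Algebra A B]

theorem map_mkQ_map_fiberScalars_le [IsJacobsonRing A]
    {N₁ N₂ : Submodule A (B ⧸ (1 : Submodule A B))} (h : N₁.IsQuotientEquivQuotientPrime N₂)
    {D : Subalgebra A B} (hD : (Subalgebra.toSubmodule D).map (mkQ 1) ≤ N₂) :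
    (Subalgebra.toSubmodule ((fiberScalars A D).map D.val)).map (mkQ 1) ≤ N₁ := by
  rintro _ ⟨_, ⟨d, hd, rfl⟩, rfl⟩
  refine h.mem_of_forall_mem_smul_sup (hD ⟨d, d.2, rfl⟩) fun m hm => mem_sup_left ?_
  obtain ⟨a, ha⟩ := mem_fiberScalars.mp hd m hm
  have hfib : d - algebraMap A D a ∈ (m • ⊤ : Submodule A D) := by
    rw [Ideal.smul_top_eq_map]
    exact Ideal.Quotient.eq.mp ha.symm
  have h0 : mkQ (1 : Submodule A B) (algebraMap A B a) = 0 :=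
    (Quotient.mk_eq_zero _).mpr (Submodule.algebraMap_mem a)
  change mkQ (1 : Submodule A B) (d : B) ∈ m • N₂
  rw [← sub_zero (mkQ 1 (d : B)), ← h0, ← map_sub]
  refine smul_mono_right m hD ?_
  rw [← map_smul'']
  refine mem_map_of_mem ?_
  have := mem_map_of_mem (f := D.val.toLinearMap) hfib
  rw [map_smul'', Submodule.map_top] at this
  convert this using 2
  · exact SetLike.ext fun b => by simp
  · simp

theorem exists_pow_pow_mem_bot_of_forall_exists_pow_pow_mem_fiberScalars [IsNoetherianRing A]
    [IsJacobsonRing A] [Module.Finite A B] {p : ℕ}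
    (h : ∀ D : Subalgebra A B, ∀ x : D, ∃ s : ℕ, x ^ p ^ s ∈ fiberScalars A D) (b : B) :
    ∃ n : ℕ, b ^ p ^ n ∈ (⊥ : Subalgebra A B) := by
  obtain ⟨F, hF₀, hFlast⟩ :=
    IsNoetherianRing.exists_relSeries_isQuotientEquivQuotientPrime A (B ⧸ (1 : Submodule A B))
  suffices ∀ i, ∀ D : Subalgebra A B, (Subalgebra.toSubmodule D).map (mkQ 1) ≤ F i →
      ∀ x ∈ D, ∃ n : ℕ, x ^ p ^ n ∈ (⊥ : Subalgebra A B) from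
    this (Fin.last _) ⊤ (by rw [show F (Fin.last _) = ⊤ from hFlast]; exact le_top) b
      Algebra.mem_top
  intro i
  induction i using Fin.induction with
  | zero =>
    intro D hD x hx
    rw [show F 0 = ⊥ from hF₀] at hD
    have hx1 : x ∈ (1 : Submodule A B) := by
      simpa using hD (mem_map_of_mem (p := Subalgebra.toSubmodule D) hx)
    exact ⟨0, by simpa [← Subalgebra.mem_toSubmodule, Algebra.toSubmodule_bot] using hx1⟩
  | succ i ih =>
    intro D hD x hx
    obtain ⟨s, hs⟩ := h D ⟨x, hx⟩
    obtain ⟨n, hn⟩ := ih _ (map_mkQ_map_fiberScalars_le (F.step i) hD) _ ⟨_, hs, rfl⟩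
    exact ⟨s + n, by rwa [pow_add, pow_mul]⟩

end Filtration

theorem powers_land_in_subalgebra_of_bijective_on_points_general
    (k : Type*) [Field k] [IsAlgClosed k] (p : ℕ) (hp : p.Prime) [CharP k p]
    (B : Type*) [CommRing B] [Algebra k B] (A : Subalgebra k B)
    (hAfg : A.FG)
    (hfin : Module.Finite A B)
    (hbij : Function.Bijective (fun φ : B →ₐ[k] k => φ.comp A.val)) :
    ∀ b : B, ∃ m : ℕ, b ^ p ^ m ∈ A := by
  have : Fact p.Prime := ⟨hp⟩
  have : Algebra.FiniteType k A := (Subalgebra.fg_iff_finiteType A).mp hAfg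
  have : IsNoetherianRing A := Algebra.FiniteType.isNoetherianRing k A
  have : IsJacobsonRing A := isJacobsonRing_of_finiteType (A := k)
  have : Algebra.FiniteType k B := .trans (S := A) inferInstance inferInstance
  have hfibres (D : Subalgebra A B) (x : D) : ∃ s : ℕ, x ^ p ^ s ∈ fiberScalars A D := by
    have : IsNoetherian A B := isNoetherian_of_isNoetherianRing_of_finite A B
    have : Module.Finite A D := .of_injective D.val.toLinearMap Subtype.val_injective
    have : Module.Finite D B := .of_restrictScalars_finite A D B
    have : Algebra.FiniteType k D := .trans (S := A) inferInstance inferInstance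
    have hinj := injective_comp_of_injective_comp_toAlgHom Subtype.val_injective
      (IsScalarTower.toAlgHom k A D) hbij.injective
    obtain ⟨s, hs⟩ := exists_pow_char_pow_mem_fiberScalars p hinj
    exact ⟨s, hs x⟩
  intro b
  obtain ⟨n, hn⟩ := exists_pow_pow_mem_bot_of_forall_exists_pow_pow_mem_fiberScalars hfibres b
  obtain ⟨a, ha⟩ := Algebra.mem_bot.mp hn
  exact ⟨n, ha ▸ a.2⟩

/-- Let `k` be an algebraically closed field of characteristic `p > 0`. Let `A ⊆ B` be
commutative `k`-algebras, both finitely generated as `k`-algebras, with `B` finite as an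
`A`-module. If restriction gives a bijection from `k`-algebra homomorphisms `B → k` to
`k`-algebra homomorphisms `A → k`, then for every `b ∈ B` there is `m : ℕ` with
`b ^ (p ^ m) ∈ A`. -/
theorem powers_land_in_subalgebra_of_bijective_on_points
    (k : Type*) [Field k] [IsAlgClosed k] (p : ℕ) (hp : p.Prime) [CharP k p]
    (B : Type*) [CommRing B] [Algebra k B] (A : Subalgebra k B)
    (hAfg : A.FG) (hBfg : (⊤ : Subalgebra k B).FG)
    (hfin : Module.Finite A B)
    (hbij : Function.Bijective (fun φ : B →ₐ[k] k => φ.comp A.val)) :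
    ∀ b : B, ∃ m : ℕ, b ^ p ^ m ∈ A :=
  powers_land_in_subalgebra_of_bijective_on_points_general k p hp B A hAfg hfin hbij
end

section
/- Let k be a commutative ring and let f : Q → R be a homomorphism of commutative k-algebras. If the induced homomorphism Q[Y] → R[Y] between polynomial rings in one variable Y (applying f to coefficients) is power-surjective, then for every prime number p the composite homomorphism Q → R → R/pR is p-power-surjective; that is, for every x ∈ R/pR there exists a natural number m such that x^(p^m) lies in the image of Q in R/pR. -/
private lemma p_power_surjective_aux
    (k : Type*) [CommRing k]
    (Q R : Type*) [CommRing Q] [CommRing R] [Algebra k Q] [Algebra k R]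
    (f : Q →ₐ[k] R)
    (hpoly : ∀ x : Polynomial R, ∃ n : ℕ, 0 < n ∧
      x ^ n ∈ Set.range (Polynomial.mapAlgHom f))
    (p : ℕ) (hp : p.Prime) (I : Ideal R) (hpI : (p : R) ∈ I) :
    ∀ x : R ⧸ I, ∃ m : ℕ,
      x ^ p ^ m ∈ Set.range ((Ideal.Quotient.mkₐ k I).comp f) := by
  intro x
  by_cases hA : Subsingleton (R ⧸ I)
  · exact ⟨0, ⟨0, Subsingleton.elim _ _⟩⟩
  haveI : Nontrivial (R ⧸ I) := not_subsingleton_iff_nontrivial.mp hA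
  haveI := Fact.mk hp
  have hp0 : ((p : ℕ) : R ⧸ I) = 0 := by
    rw [← map_natCast (Ideal.Quotient.mk I)]
    exact Ideal.Quotient.eq_zero_iff_mem.mpr hpI
  haveI hchar : CharP (R ⧸ I) p := by
    rcases hp.eq_one_or_self_of_dvd _ (ringChar.dvd hp0) with h1 | h1
    · exact absurd h1 CharP.ringChar_ne_one
    · exact h1 ▸ ringChar.charP _
  obtain ⟨r, hr⟩ := Ideal.Quotient.mk_surjective x
  obtain ⟨n, hn, g, hg⟩ := hpoly (Polynomial.X + Polynomial.C r)
  rw [Polynomial.coe_mapAlgHom] at hg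
  have h2 : Polynomial.map ((Ideal.Quotient.mk I).comp (f : Q →+* R)) g
      = (Polynomial.X + Polynomial.C x) ^ n := by
    rw [← Polynomial.map_map, hg, Polynomial.map_pow, Polynomial.map_add,
      Polynomial.map_X, Polynomial.map_C, hr]
  set j : ℕ := n.factorization p with hj
  set t : ℕ := n / p ^ j with ht
  have hnt : p ^ j * t = n := Nat.ordProj_mul_ordCompl_eq_self n p
  have hpt : ¬ p ∣ t := Nat.not_dvd_ordCompl hp hn.ne'
  have htpos : 0 < t := Nat.ordCompl_pos p hn.ne'
  have h3 : (Polynomial.X + Polynomial.C x) ^ n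
      = Polynomial.expand (R ⧸ I) (p ^ j)
          ((Polynomial.X + Polynomial.C (x ^ p ^ j)) ^ t) := by
    rw [map_pow, map_add, Polynomial.expand_X, Polynomial.expand_C,
      Polynomial.C_pow, ← add_pow_char_pow, ← pow_mul, hnt]
  have h4 := congrArg (fun q => Polynomial.coeff q ((t - 1) * p ^ j)) (h2.trans h3)
  simp only [Polynomial.coeff_map,
    Polynomial.coeff_expand_mul (pow_pos hp.pos j),
    Polynomial.coeff_X_add_C_pow] at h4
  have hts : t - (t - 1) = 1 := by omega
  have htc : t.choose (t - 1) = t := by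
    rw [← Nat.choose_symm (Nat.sub_le t 1), hts, Nat.choose_one_right]
  rw [hts, htc, pow_one] at h4
  have ht0 : ((t : ℕ) : ZMod p) ≠ 0 := by
    rw [Ne, ZMod.natCast_eq_zero_iff]; exact hpt
  set c : ℕ := ((t : ZMod p)⁻¹).val with hc
  have hct : ((c * t : ℕ) : ZMod p) = ((1 : ℕ) : ZMod p) := by
    push_cast
    rw [hc, ZMod.natCast_val, ZMod.cast_id, inv_mul_cancel₀ ht0]
  have hct' : ((c : R ⧸ I) * (t : R ⧸ I)) = 1 := by
    have := CharP.natCast_eq_natCast' (R ⧸ I) p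
      ((ZMod.natCast_eq_natCast_iff _ _ _).mp hct)
    push_cast at this
    simpa using this
  refine ⟨j, (c : Q) * g.coeff ((t - 1) * p ^ j), ?_⟩
  have heq : ((Ideal.Quotient.mkₐ k I).comp f) ((c : Q) * g.coeff ((t - 1) * p ^ j))
      = (c : R ⧸ I) * (((Ideal.Quotient.mk I).comp (f : Q →+* R))
          (g.coeff ((t - 1) * p ^ j))) := by
    simp [map_mul, map_natCast]
  rw [heq, h4]
  calc (c : R ⧸ I) * (x ^ p ^ j * (t : R ⧸ I))
      = x ^ p ^ j * ((c : R ⧸ I) * (t : R ⧸ I)) := by ring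
    _ = x ^ p ^ j := by rw [hct', mul_one]

/-- If the induced map `Q[Y] → R[Y]` is power-surjective, then for every prime `p` the
composite `Q → R → R/pR` is `p`-power-surjective. -/
theorem p_power_surjective_of_polynomial_power_surjective
    (k : Type*) [CommRing k]
    (Q R : Type*) [CommRing Q] [CommRing R] [Algebra k Q] [Algebra k R]
    (f : Q →ₐ[k] R)
    (hpoly : ∀ x : Polynomial R, ∃ n : ℕ, 0 < n ∧
      x ^ n ∈ Set.range (Polynomial.mapAlgHom f))
    (p : ℕ) (hp : p.Prime) :
    ∀ x : R ⧸ Ideal.span {(p : R)}, ∃ m : ℕ,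
      x ^ p ^ m ∈ Set.range
        ((Ideal.Quotient.mkₐ k (Ideal.span {(p : R)})).comp f) :=
  p_power_surjective_aux k Q R f hpoly p hp _ (Ideal.subset_span rfl)
end
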